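/- arXiv:2308.04506 — 9 statements merged into one kernel-verified Lean document; each statement's English description precedes it below -/
import Mathlib

section
/- (Huntington) If L is a bounded uniquely complemented lattice (with complementation x ↦ x') satisfying the additional property that x ∧ y = 0 implies y ≤ x', then L is distributive (hence a Boolean lattice). -/
/-- (Huntington) A bounded uniquely complemented lattice in which `x ⊓ y = ⊥`
implies `y ≤ x'` is distributive. -/
theorem stmt_5 {α : Type*} [Lattice α] [BoundedOrder α]
    (compl : α → α)
    (hcompl : ∀ x, x ⊓ compl x = ⊥ ∧ x ⊔ compl x = ⊤)
    (huniq : ∀ x y, x ⊓ y = ⊥ → x ⊔ y = ⊤ → y = compl x)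
    (hHunt : ∀ x y, x ⊓ y = ⊥ → y ≤ compl x) :
    ∀ x y z : α, x ⊓ (y ⊔ z) = (x ⊓ y) ⊔ (x ⊓ z) := by
  have hinv : ∀ x, compl (compl x) = x := fun x =>
    (huniq (compl x) x (by rw [inf_comm]; exact (hcompl x).1)
      (by rw [sup_comm]; exact (hcompl x).2)).symm
  intro x y z
  refine le_antisymm ?_
    (sup_le (inf_le_inf_left x le_sup_left) (inf_le_inf_left x le_sup_right))
  set d := x ⊓ y ⊔ x ⊓ z with hd
  have hdd : compl d ⊓ d = ⊥ := by rw [inf_comm]; exact (hcompl d).1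
  have key : ∀ w : α, x ⊓ w ≤ d → compl d ⊓ x ⊓ w = ⊥ := by
    intro w hw
    refine le_bot_iff.mp ?_
    calc compl d ⊓ x ⊓ w ≤ compl d ⊓ d := by
          refine le_inf (inf_le_left.trans inf_le_left) ?_
          exact le_trans (le_inf (inf_le_left.trans inf_le_right) inf_le_right) hw
      _ = ⊥ := hdd
  have hy : y ≤ compl (compl d ⊓ x) := hHunt _ _ (key y le_sup_left)
  have hz : z ≤ compl (compl d ⊓ x) := hHunt _ _ (key z le_sup_right)
  have h1 : compl d ⊓ (x ⊓ (y ⊔ z)) = ⊥ := by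
    refine le_bot_iff.mp ?_
    calc compl d ⊓ (x ⊓ (y ⊔ z)) ≤ (compl d ⊓ x) ⊓ compl (compl d ⊓ x) := by
          rw [← inf_assoc]
          exact inf_le_inf_left _ (sup_le hy hz)
      _ = ⊥ := (hcompl _).1
  have := hHunt _ _ h1
  rwa [hinv] at this
end

section
/- In a uniquely complemented bounded lattice, if the complementation is order-reversing (x ≤ y implies y' ≤ x'), then the lattice is distributive. -/
/-- In a uniquely complemented bounded lattice, if complementation is
order-reversing then the lattice is distributive. -/
theorem stmt_6 {α : Type*} [Lattice α] [BoundedOrder α]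
    (compl : α → α)
    (hcompl : ∀ x, x ⊓ compl x = ⊥ ∧ x ⊔ compl x = ⊤)
    (huniq : ∀ x y, x ⊓ y = ⊥ → x ⊔ y = ⊤ → y = compl x)
    (hanti : ∀ x y, x ≤ y → compl y ≤ compl x) :
    ∀ x y z : α, x ⊓ (y ⊔ z) = (x ⊓ y) ⊔ (x ⊓ z) := by
  have h0 : ∀ x, x ⊓ compl x = ⊥ := fun x => (hcompl x).1
  have h1 : ∀ x, x ⊔ compl x = ⊤ := fun x => (hcompl x).2
  -- involution
  have hinv : ∀ x, compl (compl x) = x := by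
    intro x
    exact (huniq (compl x) x (by rw [inf_comm]; exact h0 x)
      (by rw [sup_comm]; exact h1 x)).symm
  have hbot : compl ⊥ = ⊤ := (huniq ⊥ ⊤ (by simp) (by simp)).symm
  -- De Morgan for join
  have hdm : ∀ x y, compl (x ⊔ y) = compl x ⊓ compl y := by
    intro x y
    apply le_antisymm
    · exact le_inf (hanti _ _ le_sup_left) (hanti _ _ le_sup_right)
    · have hx : x ≤ compl (compl x ⊓ compl y) := by
        have := hanti _ _ (inf_le_left (a := compl x) (b := compl y))
        rwa [hinv] at this
      have hy : y ≤ compl (compl x ⊓ compl y) := by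
        have := hanti _ _ (inf_le_right (a := compl x) (b := compl y))
        rwa [hinv] at this
      have := hanti _ _ (sup_le hx hy)
      rwa [hinv] at this
  -- De Morgan for meet
  have hdm' : ∀ x y, compl (x ⊓ y) = compl x ⊔ compl y := by
    intro x y
    have h := hdm (compl x) (compl y)
    rw [hinv, hinv] at h
    rw [← h, hinv]
  -- if compl z = ⊥ then z = ⊤
  have htop : ∀ z, compl z = ⊥ → z = ⊤ := by
    intro z hz
    have := hinv z
    rw [hz, hbot] at this
    exact this.symm
  -- orthomodular law
  have hom : ∀ a b, a ≤ b → a ⊔ (compl a ⊓ b) = b := by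
    intro a b hab
    set c := a ⊔ (compl a ⊓ b) with hc
    have hcb : c ≤ b := sup_le hab inf_le_right
    have h2 : c ⊓ compl b = ⊥ := by
      have : c ⊓ compl b ≤ b ⊓ compl b := inf_le_inf_right _ hcb
      rw [h0] at this
      exact le_bot_iff.mp this
    have h3 : c ⊔ compl b = ⊤ := by
      apply htop
      rw [hdm, hinv, hc, hdm, hdm', hinv]
      -- goal : (compl a ⊓ (a ⊔ compl b)) ⊓ b = ⊥
      have key : (compl a ⊓ (a ⊔ compl b)) ⊓ b ≤ (a ⊔ compl b) ⊓ compl (a ⊔ compl b) := by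
        rw [hdm, hinv]
        exact le_inf (le_trans inf_le_left inf_le_right)
          (le_inf (le_trans inf_le_left inf_le_left) inf_le_right)
      rw [h0] at key
      exact le_bot_iff.mp key
    have := huniq c (compl b) h2 h3
    have h4 : compl (compl b) = compl (compl c) := by rw [this]
    rw [hinv, hinv] at h4
    exact h4.symm ▸ rfl
  -- key lemma: x ⊓ y = ⊥ → y ≤ compl x
  have hL : ∀ x y, x ⊓ y = ⊥ → y ≤ compl x := by
    intro x y hxy
    set p := x ⊔ y with hp
    -- dual orthomodular : p ⊓ (compl p ⊔ x) = x  (from x ≤ p)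
    have hdom : p ⊓ (compl p ⊔ x) = x := by
      have h := hom (compl p) (compl x) (hanti _ _ (le_sup_left : x ≤ p))
      have h' : compl (compl p ⊔ (compl (compl p) ⊓ compl x)) = compl (compl x) := by rw [h]
      rw [hinv, hinv, hdm, hdm', hinv, hinv] at h'
      rw [inf_comm, sup_comm] at h' ⊢
      exact h'
    have hyn : y ⊓ (x ⊔ compl p) = ⊥ := by
      have hy : y ⊓ (x ⊔ compl p) ≤ p ⊓ (compl p ⊔ x) := by
        exact inf_le_inf (le_sup_right) (by rw [sup_comm])
      rw [hdom] at hy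
      have : y ⊓ (x ⊔ compl p) ≤ y ⊓ x := le_inf inf_le_left hy
      rw [inf_comm] at hxy
      rw [hxy] at this
      exact le_bot_iff.mp this
    have hyn' : (x ⊔ compl p) ⊔ y = ⊤ := by
      have : (x ⊔ compl p) ⊔ y = p ⊔ compl p := by
        rw [hp]; rw [sup_comm x (compl p), sup_assoc, sup_comm (compl p)]
      rw [this, h1]
    have := huniq (x ⊔ compl p) y (by rw [inf_comm]; exact hyn) hyn'
    rw [this, hdm, hinv]
    exact le_trans inf_le_left (by rfl)
  -- distributivity
  intro x y z
  apply le_antisymm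
  · -- hard direction
    set B := (x ⊓ y) ⊔ (x ⊓ z) with hB
    set w := (x ⊓ (y ⊔ z)) ⊓ compl B with hw
    have hwx : w ≤ x := le_trans inf_le_left inf_le_left
    have hwB : w ≤ compl B := inf_le_right
    have hwy : w ⊓ y = ⊥ := by
      have hle1 : w ⊓ y ≤ (x ⊓ y) ⊓ compl B :=
        le_inf (le_inf (le_trans inf_le_left hwx) inf_le_right)
          (le_trans inf_le_left hwB)
      have h2 : (x ⊓ y) ⊓ compl B ≤ (x ⊓ y) ⊓ compl (x ⊓ y) :=
        inf_le_inf_left _ (hanti _ _ le_sup_left)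
      rw [h0] at h2
      exact le_bot_iff.mp (le_trans hle1 h2)
    have hwz : w ⊓ z = ⊥ := by
      have hle1 : w ⊓ z ≤ (x ⊓ z) ⊓ compl B :=
        le_inf (le_inf (le_trans inf_le_left hwx) inf_le_right)
          (le_trans inf_le_left hwB)
      have h2 : (x ⊓ z) ⊓ compl B ≤ (x ⊓ z) ⊓ compl (x ⊓ z) :=
        inf_le_inf_left _ (hanti _ _ le_sup_right)
      rw [h0] at h2
      exact le_bot_iff.mp (le_trans hle1 h2)
    have hyw : y ≤ compl w := hL w y hwy
    have hzw : z ≤ compl w := hL w z hwz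
    have hww : w ≤ compl w :=
      le_trans (le_trans inf_le_left inf_le_right) (sup_le hyw hzw)
    have hwbot : w = ⊥ := by
      have : w ≤ w ⊓ compl w := le_inf le_rfl hww
      rw [h0] at this
      exact le_bot_iff.mp this
    -- from w = ⊥, i.e. A ⊓ compl B = ⊥, get A ≤ B
    have hAB := hL (compl B) (x ⊓ (y ⊔ z)) (by rw [inf_comm]; exact hwbot)
    rwa [hinv] at hAB
  · exact sup_le (inf_le_inf_left x le_sup_left) (inf_le_inf_left x le_sup_right)
end

section
/- Every uniquely complemented ortholattice is distributive, hence a Boolean algebra. -/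
/-- Every uniquely complemented ortholattice is distributive. -/
theorem stmt_7 {α : Type*} [Lattice α] [BoundedOrder α]
    (perp : α → α)
    (hinf : ∀ x, x ⊓ perp x = ⊥) (hsup : ∀ x, x ⊔ perp x = ⊤)
    (hinvol : ∀ x, perp (perp x) = x)
    (hanti : ∀ x y, x ≤ y → perp y ≤ perp x)
    (huniq : ∀ x y, x ⊓ y = ⊥ → x ⊔ y = ⊤ → y = perp x) :
    ∀ x y z : α, x ⊓ (y ⊔ z) = (x ⊓ y) ⊔ (x ⊓ z) := by
  -- Galois-type flip
  have h1 : ∀ x y : α, x ≤ perp y → y ≤ perp x := by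
    intro x y h
    have := hanti _ _ h
    rwa [hinvol] at this
  -- de Morgan (sup form)
  have dm_sup : ∀ x y : α, perp (x ⊔ y) = perp x ⊓ perp y := by
    intro x y
    apply le_antisymm
    · exact le_inf (hanti _ _ le_sup_left) (hanti _ _ le_sup_right)
    · have hx : x ≤ perp (perp x ⊓ perp y) := h1 _ _ inf_le_left
      have hy : y ≤ perp (perp x ⊓ perp y) := h1 _ _ inf_le_right
      exact h1 _ _ (sup_le hx hy)
  -- orthomodular law
  have om : ∀ a b : α, a ≤ b → a ⊔ (perp a ⊓ b) = b := by
    intro a b hab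
    set d := a ⊔ (perp a ⊓ b) with hd
    have hdb : d ≤ b := sup_le hab inf_le_right
    have hw : perp d ⊓ b = ⊥ := by
      have h2 : perp d ⊓ b ≤ perp a ⊓ b :=
        inf_le_inf_right _ (hanti _ _ le_sup_left)
      have h3 : perp d ⊓ b ≤ perp (perp a ⊓ b) :=
        le_trans inf_le_left (hanti _ _ le_sup_right)
      have h4 : perp d ⊓ b ≤ (perp a ⊓ b) ⊓ perp (perp a ⊓ b) := le_inf h2 h3
      rw [hinf] at h4
      exact le_bot_iff.mp h4
    have htop : perp d ⊔ b = ⊤ := by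
      apply top_unique
      calc (⊤ : α) = d ⊔ perp d := (hsup d).symm
        _ ≤ b ⊔ perp d := sup_le_sup_right hdb _
        _ = perp d ⊔ b := sup_comm _ _
    have hb : b = perp (perp d) := huniq (perp d) b hw htop
    rw [hinvol] at hb
    exact hb.symm
  -- dual form:  a ≤ b → b ⊓ (a ⊔ perp b) = a
  have om' : ∀ a b : α, a ≤ b → b ⊓ (a ⊔ perp b) = a := by
    intro a b hab
    have h := om (perp b) (perp a) (hanti _ _ hab)
    rw [hinvol] at h
    have h2 : perp (perp b ⊔ (b ⊓ perp a)) = perp (perp a) := by rw [h]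
    rw [hinvol, dm_sup, hinvol] at h2
    have h3 : perp (b ⊓ perp a) = perp b ⊔ a := by
      have := dm_sup (perp b) a
      rw [hinvol] at this
      calc perp (b ⊓ perp a) = perp (perp (perp b ⊔ a)) := by rw [this]
        _ = perp b ⊔ a := hinvol _
    rw [h3] at h2
    rw [sup_comm (perp b) a] at h2
    exact h2
  -- disjoint implies orthogonal
  have dto : ∀ x y : α, x ⊓ y = ⊥ → y ≤ perp x := by
    intro x y h
    set b := x ⊔ y with hb
    set c := y ⊔ perp b with hc
    have hbc : b ⊓ c = y := om' y b le_sup_right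
    have hxc : x ⊓ c = ⊥ := by
      calc x ⊓ c = (x ⊓ b) ⊓ c := by rw [inf_eq_left.mpr (le_sup_left : x ≤ b)]
        _ = x ⊓ (b ⊓ c) := inf_assoc _ _ _
        _ = x ⊓ y := by rw [hbc]
        _ = ⊥ := h
    have hxtop : x ⊔ c = ⊤ := by
      calc x ⊔ c = (x ⊔ y) ⊔ perp b := (sup_assoc _ _ _).symm
        _ = ⊤ := hsup b
    have := huniq x c hxc hxtop
    exact le_trans le_sup_left (le_of_eq this)
  -- distributivity
  intro x y z
  apply le_antisymm
  · set u := x ⊓ (y ⊔ z) with hu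
    set v := (x ⊓ y) ⊔ (x ⊓ z) with hv
    set w := u ⊓ perp v with hwdef
    have hwx : w ≤ x := le_trans inf_le_left inf_le_left
    have hwv : w ≤ perp v := inf_le_right
    have hwy : w ⊓ y = ⊥ := by
      have h2 : w ⊓ y ≤ v ⊓ perp v :=
        le_inf (le_trans (inf_le_inf_right y hwx) le_sup_left)
          (le_trans inf_le_left hwv)
      rw [hinf] at h2
      exact le_bot_iff.mp h2
    have hwz : w ⊓ z = ⊥ := by
      have h2 : w ⊓ z ≤ v ⊓ perp v :=
        le_inf (le_trans (inf_le_inf_right z hwx) le_sup_right)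
          (le_trans inf_le_left hwv)
      rw [hinf] at h2
      exact le_bot_iff.mp h2
    have hwy' : w ≤ perp y := dto y w (by rw [inf_comm]; exact hwy)
    have hwz' : w ≤ perp z := dto z w (by rw [inf_comm]; exact hwz)
    have hwyz : w ≤ perp (y ⊔ z) := by rw [dm_sup]; exact le_inf hwy' hwz'
    have hwyz2 : w ≤ y ⊔ z := le_trans inf_le_left inf_le_right
    have hwbot : w = ⊥ := by
      have h2 : w ≤ (y ⊔ z) ⊓ perp (y ⊔ z) := le_inf hwyz2 hwyz
      rw [hinf] at h2
      exact le_bot_iff.mp h2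
    have huv : u ≤ perp (perp v) := dto (perp v) u (by rw [inf_comm]; exact hwbot)
    rwa [hinvol] at huv
  · exact sup_le (inf_le_inf_left x le_sup_left) (inf_le_inf_left x le_sup_right)
end

section
/- In a uniquely complemented bounded lattice, if the De Morgan law (x ∧ y)' = x' ∨ y' holds for all comparable pairs x ≤ y, then the lattice is distributive. -/
/-- In a uniquely complemented bounded lattice, if the De Morgan law
`(x ⊓ y)' = x' ⊔ y'` holds for all comparable pairs `x ≤ y`, then the lattice
is distributive. -/
theorem stmt_8 {α : Type*} [Lattice α] [BoundedOrder α]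
    (compl : α → α)
    (hcompl : ∀ x, x ⊓ compl x = ⊥ ∧ x ⊔ compl x = ⊤)
    (huniq : ∀ x y, x ⊓ y = ⊥ → x ⊔ y = ⊤ → y = compl x)
    (hDM : ∀ x y : α, x ≤ y → compl (x ⊓ y) = compl x ⊔ compl y) :
    ∀ x y z : α, x ⊓ (y ⊔ z) = (x ⊓ y) ⊔ (x ⊓ z) := by
  -- complementation is an involution
  have hinv : ∀ x, compl (compl x) = x := by
    intro x
    exact (huniq (compl x) x (by rw [inf_comm]; exact (hcompl x).1)
      (by rw [sup_comm]; exact (hcompl x).2)).symm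
  -- complementation is antitone
  have hmono : ∀ {x y : α}, x ≤ y → compl y ≤ compl x := by
    intro x y h
    have h2 := hDM x y h
    rw [inf_eq_left.mpr h] at h2
    rw [h2]; exact le_sup_right
  -- De Morgan for joins
  have DMj : ∀ x y : α, compl (x ⊔ y) = compl x ⊓ compl y := by
    intro x y
    apply le_antisymm (le_inf (hmono le_sup_left) (hmono le_sup_right))
    have hx : x ≤ compl (compl x ⊓ compl y) := by
      have := hmono (inf_le_left : compl x ⊓ compl y ≤ compl x)
      rwa [hinv] at this
    have hy : y ≤ compl (compl x ⊓ compl y) := by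
      have := hmono (inf_le_right : compl x ⊓ compl y ≤ compl y)
      rwa [hinv] at this
    have := hmono (sup_le hx hy)
    rwa [hinv] at this
  -- De Morgan for meets
  have DMm : ∀ x y : α, compl (x ⊓ y) = compl x ⊔ compl y := by
    intro x y
    have h := DMj (compl x) (compl y)
    rw [hinv, hinv] at h
    calc compl (x ⊓ y) = compl (compl (compl x ⊔ compl y)) := by rw [h]
      _ = compl x ⊔ compl y := hinv _
  -- orthomodularity
  have OM : ∀ a b : α, a ≤ b → a ⊔ (compl a ⊓ b) = b := by
    intro a b hab
    set x := compl a ⊓ (a ⊔ compl b) with hxdef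
    have hcx : compl (a ⊔ compl b) = compl a ⊓ b := by
      rw [DMj, hinv]
    have h1 : x ⊓ b = ⊥ := by
      apply le_bot_iff.mp
      calc x ⊓ b ≤ (a ⊔ compl b) ⊓ (compl a ⊓ b) :=
            le_inf (le_trans inf_le_left inf_le_right)
              (le_inf (le_trans inf_le_left inf_le_left) inf_le_right)
        _ = (a ⊔ compl b) ⊓ compl (a ⊔ compl b) := by rw [hcx]
        _ = ⊥ := (hcompl _).1
    have h2 : x ⊔ b = ⊤ := by
      apply top_le_iff.mp
      calc ⊤ = b ⊔ compl b := ((hcompl b).2).symm ▸ by rw [← (hcompl b).2]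
        _ ≤ b ⊔ x := sup_le_sup_left (le_inf (hmono hab) le_sup_right) b
        _ = x ⊔ b := sup_comm _ _
    have hb := huniq x b h1 h2
    have : compl x = a ⊔ (compl a ⊓ b) := by
      rw [hxdef, DMm, hinv, hcx]
    exact (hb.trans this).symm
  -- dual form of orthomodularity
  have OMd : ∀ a b : α, a ≤ b → b ⊓ (compl b ⊔ a) = a := by
    intro a b hab
    have h := OM (compl b) (compl a) (hmono hab)
    rw [hinv] at h
    have := congrArg compl h
    rwa [DMj, DMm, hinv, hinv] at this
  -- key lemma: disjointness gives comparability with the complement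
  have crux : ∀ a b : α, a ⊓ b = ⊥ → b ≤ compl a := by
    intro a b h
    have hm : (a ⊔ b) ⊓ (compl (a ⊔ b) ⊔ b) = b := OMd b (a ⊔ b) le_sup_right
    set c := b ⊔ compl (a ⊔ b) with hcdef
    have h1 : a ⊓ c = ⊥ := by
      apply le_bot_iff.mp
      have : a ⊓ c ≤ a ⊓ b := by
        apply le_inf inf_le_left
        calc a ⊓ c ≤ (a ⊔ b) ⊓ (compl (a ⊔ b) ⊔ b) := by
              apply le_inf (le_trans inf_le_left le_sup_left)
              rw [hcdef]; exact le_trans inf_le_right (by rw [sup_comm])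
          _ = b := hm
      rw [h] at this; exact this
    have h2 : a ⊔ c = ⊤ := by
      rw [hcdef, ← sup_assoc]
      exact (hcompl (a ⊔ b)).2
    have := huniq a c h1 h2
    rw [← this]; exact le_sup_left
  -- distributivity
  intro x y z
  apply le_antisymm
  · set w := compl ((x ⊓ y) ⊔ (x ⊓ z)) with hwdef
    have hwy : (w ⊓ x) ⊓ y = ⊥ := by
      apply le_bot_iff.mp
      calc (w ⊓ x) ⊓ y ≤ compl (x ⊓ y) ⊓ (x ⊓ y) := by
            apply le_inf
            · exact le_trans inf_le_left (le_trans inf_le_left (hmono le_sup_left))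
            · exact le_inf (le_trans inf_le_left inf_le_right) inf_le_right
        _ = ⊥ := by rw [inf_comm]; exact (hcompl _).1
    have hwz : (w ⊓ x) ⊓ z = ⊥ := by
      apply le_bot_iff.mp
      calc (w ⊓ x) ⊓ z ≤ compl (x ⊓ z) ⊓ (x ⊓ z) := by
            apply le_inf
            · exact le_trans inf_le_left (le_trans inf_le_left (hmono le_sup_right))
            · exact le_inf (le_trans inf_le_left inf_le_right) inf_le_right
        _ = ⊥ := by rw [inf_comm]; exact (hcompl _).1
    have hy' : w ⊓ x ≤ compl y := crux y (w ⊓ x) (by rw [inf_comm]; exact hwy)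
    have hz' : w ⊓ x ≤ compl z := crux z (w ⊓ x) (by rw [inf_comm]; exact hwz)
    have hyz : w ⊓ x ≤ compl (y ⊔ z) := by rw [DMj]; exact le_inf hy' hz'
    have hfin : w ⊓ (x ⊓ (y ⊔ z)) = ⊥ := by
      apply le_bot_iff.mp
      calc w ⊓ (x ⊓ (y ⊔ z)) ≤ compl (y ⊔ z) ⊓ (y ⊔ z) := by
            apply le_inf
            · exact le_trans (le_inf inf_le_left (le_trans inf_le_right inf_le_left)) hyz
            · exact le_trans inf_le_right inf_le_right
        _ = ⊥ := by rw [inf_comm]; exact (hcompl _).1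
    have := crux w (x ⊓ (y ⊔ z)) hfin
    rwa [hwdef, hinv] at this
  · exact sup_le (le_inf inf_le_left (le_trans inf_le_right le_sup_left))
      (le_inf inf_le_left (le_trans inf_le_right le_sup_right))
end

section
/- (Birkhoff–Ward) Every complete, atomic, dually atomic uniquely complemented lattice is distributive (hence a complete atomic Boolean algebra). -/
/-- (Birkhoff–Ward) Every complete, atomic, dually atomic uniquely complemented
lattice is distributive. -/
theorem stmt_9 {α : Type*} [CompleteLattice α]
    (hatomic : ∀ x : α, x ≠ ⊥ → ∃ a, IsAtom a ∧ a ≤ x)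
    (hdually : ∀ x : α, ∃ S : Set α, (∀ c ∈ S, IsCoatom c) ∧ x = sInf S)
    (compl : α → α)
    (hcompl : ∀ x, x ⊓ compl x = ⊥ ∧ x ⊔ compl x = ⊤)
    (huniq : ∀ x y, x ⊓ y = ⊥ → x ⊔ y = ⊤ → y = compl x) :
    ∀ x y z : α, x ⊓ (y ⊔ z) = (x ⊓ y) ⊔ (x ⊓ z) := by
  -- An atom is never below its own complement.
  have hnotle : ∀ p : α, IsAtom p → ¬ p ≤ compl p := by
    intro p hp hle
    have : p ≤ ⊥ := by
      have := (hcompl p).1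
      calc p ≤ p ⊓ compl p := le_inf le_rfl hle
        _ = ⊥ := this
    exact hp.1 (le_bot_iff.mp this)
  -- Fact 1: a coatom not above an atom p is the complement of p.
  have fact1 : ∀ p m : α, IsAtom p → IsCoatom m → ¬ p ≤ m → m = compl p := by
    intro p m hp hm hpm
    apply huniq
    · rcases hp.le_iff.mp (inf_le_left (b := m)) with h | h
      · exact h
      · exact absurd (h ▸ inf_le_right) hpm
    · apply hm.2
      exact lt_of_le_of_ne le_sup_right (fun h => hpm (h ▸ le_sup_left))
  -- Fact 2: dichotomy, p ≤ x or x ≤ compl p.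
  have fact2 : ∀ p x : α, IsAtom p → p ≤ x ∨ x ≤ compl p := by
    intro p x hp
    obtain ⟨S, hS, rfl⟩ := hdually x
    by_cases h : ∀ m ∈ S, p ≤ m
    · exact Or.inl (le_sInf h)
    · push_neg at h
      obtain ⟨m, hmS, hpm⟩ := h
      right
      have := fact1 p m hp (hS m hmS) hpm
      exact this ▸ sInf_le hmS
  -- Fact 5: atoms split over joins.
  have fact5 : ∀ p y z : α, IsAtom p → p ≤ y ⊔ z → p ≤ y ∨ p ≤ z := by
    intro p y z hp h
    rcases fact2 p y hp with hy | hy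
    · exact Or.inl hy
    rcases fact2 p z hp with hz | hz
    · exact Or.inr hz
    exact absurd (h.trans (sup_le hy hz)) (hnotle p hp)
  -- Fact 4: order is determined by atoms.
  have fact4 : ∀ a b : α, (∀ p : α, IsAtom p → p ≤ a → p ≤ b) → a ≤ b := by
    intro a b hab
    by_contra hle
    obtain ⟨S, hS, rfl⟩ := hdually b
    have : ¬ ∀ m ∈ S, a ≤ m := fun h => hle (le_sInf h)
    push_neg at this
    obtain ⟨m, hmS, ham⟩ := this
    have hm := hS m hmS
    -- find an atom below compl m
    have hcm : compl m ≠ ⊥ := by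
      intro h
      have := (hcompl m).2
      rw [h, sup_bot_eq] at this
      exact hm.1 this
    obtain ⟨p, hp, hpcm⟩ := hatomic (compl m) hcm
    have hpm : ¬ p ≤ m := by
      intro h
      have : p ≤ ⊥ := (hcompl m).1 ▸ le_inf h hpcm
      exact hp.1 (le_bot_iff.mp this)
    have hmeq := fact1 p m hp hm hpm
    have hpa : p ≤ a := by
      rcases fact2 p a hp with h | h
      · exact h
      · exact absurd (hmeq ▸ h) ham
    have : p ≤ compl p := hmeq ▸ ((hab p hp hpa).trans (sInf_le hmS))
    exact hnotle p hp this
  intro x y z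
  apply le_antisymm
  · apply fact4
    intro p hp hple
    have hx : p ≤ x := hple.trans inf_le_left
    rcases fact5 p y z hp (hple.trans inf_le_right) with h | h
    · exact le_trans (le_inf hx h) le_sup_left
    · exact le_trans (le_inf hx h) le_sup_right
  · exact sup_le (inf_le_inf_left x le_sup_left) (inf_le_inf_left x le_sup_right)
end

section
/- (Birkhoff–von Neumann) Every uniquely complemented modular lattice is distributive. -/
set_option linter.unusedSectionVars false

section aux
variable {α : Type*} [Lattice α] [IsModularLattice α]

/-- e ≤ f for the median elements. -/
lemma bvn_ef (x y z : α) :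
    x ⊓ y ⊔ y ⊓ z ⊔ z ⊓ x ≤ (x ⊔ y) ⊓ (y ⊔ z) ⊓ (z ⊔ x) := by
  refine sup_le (sup_le ?_ ?_) ?_
  · exact le_inf (le_inf (inf_le_left.trans le_sup_left) (inf_le_right.trans le_sup_left))
      (inf_le_left.trans le_sup_right)
  · exact le_inf (le_inf (inf_le_left.trans le_sup_right) (inf_le_left.trans le_sup_left))
      (inf_le_right.trans le_sup_left)
  · exact le_inf (le_inf (inf_le_right.trans le_sup_left) (inf_le_left.trans le_sup_right))
      (inf_le_left.trans le_sup_left)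

lemma bvn_xe (x y z : α) :
    x ⊔ (x ⊓ y ⊔ y ⊓ z ⊔ z ⊓ x) = x ⊔ y ⊓ z := by
  apply le_antisymm
  · exact sup_le le_sup_left (sup_le (sup_le (inf_le_left.trans le_sup_left) le_sup_right)
      (inf_le_right.trans le_sup_left))
  · exact sup_le_sup_left (le_sup_right.trans le_sup_left) _

lemma bvn_xf (x y z : α) :
    x ⊓ ((x ⊔ y) ⊓ (y ⊔ z) ⊓ (z ⊔ x)) = x ⊓ (y ⊔ z) := by
  apply le_antisymm
  · exact inf_le_inf_left _ (inf_le_left.trans inf_le_right)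
  · exact le_inf inf_le_left (le_inf (le_inf (inf_le_left.trans le_sup_left) inf_le_right)
      (inf_le_left.trans le_sup_right))

/-- The key meet identity. -/
lemma bvn_meet (x y z : α) :
    ((x ⊔ (x ⊓ y ⊔ y ⊓ z ⊔ z ⊓ x)) ⊓ ((x ⊔ y) ⊓ (y ⊔ z) ⊓ (z ⊔ x))) ⊓
      ((y ⊔ (x ⊓ y ⊔ y ⊓ z ⊔ z ⊓ x)) ⊓ ((x ⊔ y) ⊓ (y ⊔ z) ⊓ (z ⊔ x))) =
      x ⊓ y ⊔ y ⊓ z ⊔ z ⊓ x := by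
  set e := x ⊓ y ⊔ y ⊓ z ⊔ z ⊓ x with he
  set f := (x ⊔ y) ⊓ (y ⊔ z) ⊓ (z ⊔ x) with hf
  have key : (x ⊔ y ⊓ z) ⊓ (y ⊔ z ⊓ x) = e := by
    have h1 : z ⊓ x ≤ x ⊔ y ⊓ z := inf_le_right.trans le_sup_left
    rw [← inf_sup_assoc_of_le _ h1, sup_comm x (y ⊓ z),
      sup_inf_assoc_of_le _ (inf_le_left : y ⊓ z ≤ y), he]
    ac_rfl
  have hye : y ⊔ e = y ⊔ z ⊓ x := by
    rw [he, show x ⊓ y ⊔ y ⊓ z ⊔ z ⊓ x = y ⊓ z ⊔ z ⊓ x ⊔ x ⊓ y from by ac_rfl]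
    exact bvn_xe y z x
  have hxe : x ⊔ e = x ⊔ y ⊓ z := by rw [he]; exact bvn_xe x y z
  have hef : e ≤ f := bvn_ef x y z
  rw [← inf_inf_distrib_right, hxe, hye, key]
  exact inf_eq_left.2 hef

/-- The key join identity. -/
lemma bvn_join (x y z : α) :
    ((x ⊔ (x ⊓ y ⊔ y ⊓ z ⊔ z ⊓ x)) ⊓ ((x ⊔ y) ⊓ (y ⊔ z) ⊓ (z ⊔ x))) ⊔
      ((y ⊔ (x ⊓ y ⊔ y ⊓ z ⊔ z ⊓ x)) ⊓ ((x ⊔ y) ⊓ (y ⊔ z) ⊓ (z ⊔ x))) =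
      (x ⊔ y) ⊓ (y ⊔ z) ⊓ (z ⊔ x) := by
  set e := x ⊓ y ⊔ y ⊓ z ⊔ z ⊓ x with he
  set f := (x ⊔ y) ⊓ (y ⊔ z) ⊓ (z ⊔ x) with hf
  have hef : e ≤ f := bvn_ef x y z
  have ha : (x ⊔ e) ⊓ f = e ⊔ x ⊓ f := by
    rw [sup_comm x e, sup_inf_assoc_of_le _ hef]
  have hb : (y ⊔ e) ⊓ f = e ⊔ y ⊓ f := by
    rw [sup_comm y e, sup_inf_assoc_of_le _ hef]
  have hyf : y ⊓ f = y ⊓ (z ⊔ x) := by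
    rw [hf, show (x ⊔ y) ⊓ (y ⊔ z) ⊓ (z ⊔ x) = (y ⊔ z) ⊓ (z ⊔ x) ⊓ (x ⊔ y) from by ac_rfl]
    exact bvn_xf y z x
  have hxf : x ⊓ f = x ⊓ (y ⊔ z) := by rw [hf]; exact bvn_xf x y z
  have key : x ⊓ (y ⊔ z) ⊔ y ⊓ (z ⊔ x) = f := by
    have h1 : x ⊓ (y ⊔ z) ≤ z ⊔ x := inf_le_left.trans le_sup_right
    rw [← sup_inf_assoc_of_le _ h1, inf_comm x (y ⊔ z),
      inf_sup_assoc_of_le _ (le_sup_left : y ≤ y ⊔ z), hf]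
    ac_rfl
  rw [ha, hb, ← sup_sup_distrib_left, hxf, hyf, key]
  exact sup_eq_right.2 hef
end aux

/-- (Birkhoff–von Neumann) Every uniquely complemented modular lattice is
distributive. -/
theorem stmt_10 {α : Type*} [Lattice α] [BoundedOrder α] [IsModularLattice α]
    (compl : α → α)
    (hcompl : ∀ x, x ⊓ compl x = ⊥ ∧ x ⊔ compl x = ⊤)
    (huniq : ∀ x y, x ⊓ y = ⊥ → x ⊔ y = ⊤ → y = compl x) :
    ∀ x y z : α, x ⊓ (y ⊔ z) = (x ⊓ y) ⊔ (x ⊓ z) := by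
  -- uniqueness of relative complements
  have relcomp : ∀ e f a b : α, e ≤ a → a ≤ f → e ≤ b →
      b ⊓ a = e → b ⊔ a = f → a = e ⊔ f ⊓ compl b := by
    intro e f a b hea haf heb hm hj
    have hbf : b ≤ f := hj ▸ le_sup_left
    set m := compl e ⊓ a with hmdef
    have h1 : e ⊔ m = a := by
      rw [hmdef, ← sup_inf_assoc_of_le _ hea, (hcompl e).2, top_inf_eq]
    have h2 : f ⊓ (m ⊔ compl f) = m := by
      rw [inf_comm, sup_inf_assoc_of_le _ ((inf_le_right.trans haf : m ≤ f)),
        inf_comm (compl f) f, (hcompl f).1, sup_bot_eq]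
    have h3 : b ⊓ (m ⊔ compl f) = ⊥ := by
      have : b ⊓ (m ⊔ compl f) = b ⊓ f ⊓ (m ⊔ compl f) := by
        rw [inf_eq_left.2 hbf]
      rw [this, inf_assoc, h2, hmdef, show b ⊓ (compl e ⊓ a) = b ⊓ a ⊓ compl e by ac_rfl,
        hm, (hcompl e).1]
    have h4 : b ⊔ (m ⊔ compl f) = ⊤ := by
      rw [← sup_assoc, show b ⊔ m = b ⊔ (e ⊔ m) by rw [← sup_assoc, sup_eq_left.2 heb],
        h1, hj, (hcompl f).2]
    rw [← huniq b _ h3 h4, h2, h1]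
  intro x y z
  set e := x ⊓ y ⊔ y ⊓ z ⊔ z ⊓ x with he
  set f := (x ⊔ y) ⊓ (y ⊔ z) ⊓ (z ⊔ x) with hf
  have hef : e ≤ f := bvn_ef x y z
  set a := (x ⊔ e) ⊓ f with hadef
  set b := (y ⊔ e) ⊓ f with hbdef
  set c := (z ⊔ e) ⊓ f with hcdef
  have hea : e ≤ a := le_inf (le_sup_right) hef
  have heb : e ≤ b := le_inf (le_sup_right) hef
  have hec : e ≤ c := le_inf (le_sup_right) hef
  have haf : a ≤ f := inf_le_right
  have hcf : c ≤ f := inf_le_right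
  -- permuted versions of e and f
  have he2 : y ⊓ z ⊔ z ⊓ x ⊔ x ⊓ y = e := by rw [he]; ac_rfl
  have hf2 : (y ⊔ z) ⊓ (z ⊔ x) ⊓ (x ⊔ y) = f := by rw [hf]; ac_rfl
  have hab : a ⊓ b = e := bvn_meet x y z
  have hab' : a ⊔ b = f := bvn_join x y z
  have hbc : b ⊓ c = e := by
    have := bvn_meet y z x
    rwa [he2, hf2, ← hbdef, ← hcdef] at this
  have hbc' : b ⊔ c = f := by
    have := bvn_join y z x
    rwa [he2, hf2, ← hbdef, ← hcdef] at this
  have hca : c ⊓ a = e := by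
    have := bvn_meet z x y
    have he3 : z ⊓ x ⊔ x ⊓ y ⊔ y ⊓ z = e := by rw [he]; ac_rfl
    have hf3 : (z ⊔ x) ⊓ (x ⊔ y) ⊓ (y ⊔ z) = f := by rw [hf]; ac_rfl
    rwa [he3, hf3, ← hcdef, ← hadef] at this
  have hca' : c ⊔ a = f := by
    have := bvn_join z x y
    have he3 : z ⊓ x ⊔ x ⊓ y ⊔ y ⊓ z = e := by rw [he]; ac_rfl
    have hf3 : (z ⊔ x) ⊓ (x ⊔ y) ⊓ (y ⊔ z) = f := by rw [hf]; ac_rfl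
    rwa [he3, hf3, ← hcdef, ← hadef] at this
  -- a and c are both relative complements of b in [e,f], hence equal
  have h1 : a = e ⊔ f ⊓ compl b :=
    relcomp e f a b hea haf heb (by rw [inf_comm]; exact hab) (by rw [sup_comm]; exact hab')
  have h2 : c = e ⊔ f ⊓ compl b := relcomp e f c b hec hcf heb hbc hbc'
  have hac : a = c := h1.trans h2.symm
  have hefeq : e = f := by
    have h3 : e = a := by rw [← hca, ← hac, inf_idem]
    have h4 : f = a := by rw [← hca', ← hac, sup_idem]
    rw [h3, h4]
  -- conclude distributivity
  have hxf : x ⊓ f = x ⊓ (y ⊔ z) := bvn_xf x y z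
  have hxe : x ⊓ e = x ⊓ y ⊔ x ⊓ z := by
    rw [he, show x ⊓ y ⊔ y ⊓ z ⊔ z ⊓ x = (x ⊓ y ⊔ z ⊓ x) ⊔ y ⊓ z by ac_rfl,
      sup_comm (x ⊓ y ⊔ z ⊓ x) (y ⊓ z),
      ← inf_sup_assoc_of_le _ (sup_le inf_le_left inf_le_right : x ⊓ y ⊔ z ⊓ x ≤ x)]
    rw [show x ⊓ (y ⊓ z) ⊔ (x ⊓ y ⊔ z ⊓ x) = (x ⊓ y ⊔ x ⊓ (y ⊓ z)) ⊔ z ⊓ x by ac_rfl]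
    rw [sup_eq_left.2 (le_inf (inf_le_left) (inf_le_right.trans inf_le_left) : x ⊓ (y ⊓ z) ≤ x ⊓ y),
      inf_comm z x]
  rw [← hxf, ← hefeq, hxe]
end

section
/- A uniquely complemented nondistributive lattice is not modular. -/
section Aux

variable {α : Type*} [Lattice α]

private lemma aux_ple (a b c : α) :
    (a ⊓ b) ⊔ ((b ⊓ c) ⊔ (c ⊓ a)) ≤ (a ⊔ b) ⊓ ((b ⊔ c) ⊓ (c ⊔ a)) := by
  refine sup_le (le_inf ?_ (le_inf ?_ ?_)) (sup_le (le_inf ?_ (le_inf ?_ ?_))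
    (le_inf ?_ (le_inf ?_ ?_))) <;>
    first
    | exact le_sup_of_le_left inf_le_left
    | exact le_sup_of_le_right inf_le_right
    | exact le_sup_of_le_left inf_le_right
    | exact le_sup_of_le_right inf_le_left
    | exact inf_le_sup

private lemma aux_form [IsModularLattice α] {p q : α} (a : α) (hpq : p ≤ q) :
    (a ⊓ q) ⊔ p = (a ⊔ p) ⊓ q := by
  rw [sup_comm a p, sup_inf_assoc_of_le a hpq, sup_comm p (a ⊓ q)]

private lemma aux_inf [IsModularLattice α] (a b c p q : α)
    (hp : p = (a ⊓ b) ⊔ ((b ⊓ c) ⊔ (c ⊓ a)))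
    (hq : q = (a ⊔ b) ⊓ ((b ⊔ c) ⊓ (c ⊔ a))) :
    ((a ⊔ p) ⊓ q) ⊓ ((b ⊔ p) ⊓ q) = p := by
  have hpq : p ≤ q := by subst hp hq; exact aux_ple a b c
  have hap : a ⊔ p = a ⊔ (b ⊓ c) := by
    rw [hp]
    have h1 : a ⊓ b ≤ a := inf_le_left
    have h2 : c ⊓ a ≤ a := inf_le_right
    calc a ⊔ ((a ⊓ b) ⊔ ((b ⊓ c) ⊔ (c ⊓ a)))
        = (a ⊔ (a ⊓ b)) ⊔ ((b ⊓ c) ⊔ (c ⊓ a)) := by rw [sup_assoc]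
      _ = a ⊔ ((b ⊓ c) ⊔ (c ⊓ a)) := by rw [sup_eq_left.2 h1]
      _ = (a ⊔ (c ⊓ a)) ⊔ (b ⊓ c) := by ac_rfl
      _ = a ⊔ (b ⊓ c) := by rw [sup_eq_left.2 h2]
  have hbp : b ⊔ p = b ⊔ (c ⊓ a) := by
    rw [hp]
    have h1 : a ⊓ b ≤ b := inf_le_right
    have h2 : b ⊓ c ≤ b := inf_le_left
    calc b ⊔ ((a ⊓ b) ⊔ ((b ⊓ c) ⊔ (c ⊓ a)))
        = ((b ⊔ (a ⊓ b)) ⊔ (b ⊓ c)) ⊔ (c ⊓ a) := by ac_rfl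
      _ = (b ⊔ (b ⊓ c)) ⊔ (c ⊓ a) := by rw [sup_eq_left.2 h1]
      _ = b ⊔ (c ⊓ a) := by rw [sup_eq_left.2 h2]
  have key : (a ⊔ (b ⊓ c)) ⊓ (b ⊔ (c ⊓ a)) = p := by
    have h1 : c ⊓ a ≤ a ⊔ (b ⊓ c) := le_sup_of_le_left inf_le_right
    have h2 : b ⊓ c ≤ b := inf_le_left
    calc (a ⊔ (b ⊓ c)) ⊓ (b ⊔ (c ⊓ a))
        = ((c ⊓ a) ⊔ b) ⊓ (a ⊔ (b ⊓ c)) := by rw [inf_comm, sup_comm b (c ⊓ a)]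
      _ = (c ⊓ a) ⊔ (b ⊓ (a ⊔ (b ⊓ c))) := sup_inf_assoc_of_le b h1
      _ = (c ⊓ a) ⊔ (((b ⊓ c) ⊔ a) ⊓ b) := by rw [inf_comm b, sup_comm a (b ⊓ c)]
      _ = (c ⊓ a) ⊔ ((b ⊓ c) ⊔ (a ⊓ b)) := by rw [sup_inf_assoc_of_le a h2]
      _ = p := by rw [hp]; ac_rfl
  calc ((a ⊔ p) ⊓ q) ⊓ ((b ⊔ p) ⊓ q)
      = ((a ⊔ p) ⊓ (b ⊔ p)) ⊓ q := by ac_rfl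
    _ = ((a ⊔ (b ⊓ c)) ⊓ (b ⊔ (c ⊓ a))) ⊓ q := by rw [hap, hbp]
    _ = p ⊓ q := by rw [key]
    _ = p := inf_eq_left.2 hpq

private lemma aux_sup [IsModularLattice α] (a b c p q : α)
    (hp : p = (a ⊓ b) ⊔ ((b ⊓ c) ⊔ (c ⊓ a)))
    (hq : q = (a ⊔ b) ⊓ ((b ⊔ c) ⊓ (c ⊔ a))) :
    ((a ⊓ q) ⊔ p) ⊔ ((b ⊓ q) ⊔ p) = q := by
  have hpq : p ≤ q := by subst hp hq; exact aux_ple a b c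
  have haq : a ⊓ q = a ⊓ (b ⊔ c) := by
    rw [hq]
    have h1 : a ≤ a ⊔ b := le_sup_left
    have h2 : a ≤ c ⊔ a := le_sup_right
    calc a ⊓ ((a ⊔ b) ⊓ ((b ⊔ c) ⊓ (c ⊔ a)))
        = (a ⊓ (a ⊔ b)) ⊓ ((b ⊔ c) ⊓ (c ⊔ a)) := by rw [inf_assoc]
      _ = a ⊓ ((b ⊔ c) ⊓ (c ⊔ a)) := by rw [inf_eq_left.2 h1]
      _ = (a ⊓ (c ⊔ a)) ⊓ (b ⊔ c) := by ac_rfl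
      _ = a ⊓ (b ⊔ c) := by rw [inf_eq_left.2 h2]
  have hbq : b ⊓ q = b ⊓ (c ⊔ a) := by
    rw [hq]
    have h1 : b ≤ a ⊔ b := le_sup_right
    have h2 : b ≤ b ⊔ c := le_sup_left
    calc b ⊓ ((a ⊔ b) ⊓ ((b ⊔ c) ⊓ (c ⊔ a)))
        = ((b ⊓ (a ⊔ b)) ⊓ (b ⊔ c)) ⊓ (c ⊔ a) := by ac_rfl
      _ = (b ⊓ (b ⊔ c)) ⊓ (c ⊔ a) := by rw [inf_eq_left.2 h1]
      _ = b ⊓ (c ⊔ a) := by rw [inf_eq_left.2 h2]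
  have key : (a ⊓ (b ⊔ c)) ⊔ (b ⊓ (c ⊔ a)) = q := by
    have h1 : a ⊓ (b ⊔ c) ≤ c ⊔ a := le_sup_of_le_right inf_le_left
    have h2 : b ≤ b ⊔ c := le_sup_left
    calc (a ⊓ (b ⊔ c)) ⊔ (b ⊓ (c ⊔ a))
        = ((c ⊔ a) ⊓ b) ⊔ (a ⊓ (b ⊔ c)) := by rw [sup_comm, inf_comm b (c ⊔ a)]
      _ = (c ⊔ a) ⊓ (b ⊔ (a ⊓ (b ⊔ c))) := inf_sup_assoc_of_le b h1
      _ = (c ⊔ a) ⊓ (((b ⊔ c) ⊓ a) ⊔ b) := by rw [inf_comm a (b ⊔ c), sup_comm b]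
      _ = (c ⊔ a) ⊓ ((b ⊔ c) ⊓ (a ⊔ b)) := by rw [inf_sup_assoc_of_le a h2]
      _ = q := by rw [hq]; ac_rfl
  calc ((a ⊓ q) ⊔ p) ⊔ ((b ⊓ q) ⊔ p)
      = ((a ⊓ q) ⊔ (b ⊓ q)) ⊔ p := by ac_rfl
    _ = ((a ⊓ (b ⊔ c)) ⊔ (b ⊓ (c ⊔ a))) ⊔ p := by rw [haq, hbq]
    _ = q ⊔ p := by rw [key]
    _ = q := sup_eq_left.2 hpq

private lemma aux_uniq [BoundedOrder α] [IsModularLattice α]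
    (compl : α → α)
    (hcompl : ∀ x, x ⊓ compl x = ⊥ ∧ x ⊔ compl x = ⊤)
    (huniq : ∀ x y, x ⊓ y = ⊥ → x ⊔ y = ⊤ → y = compl x)
    (p q x y z : α) (hpx : p ≤ x) (hxq : x ≤ q) (hpy : p ≤ y) (hpz : p ≤ z)
    (hxy : x ⊓ y = p) (hxy' : x ⊔ y = q) (hxz : x ⊓ z = p) (hxz' : x ⊔ z = q) :
    y = z := by
  set p' := compl p with hp'
  set q' := compl q with hq'
  obtain ⟨hpb, hpt⟩ := hcompl p
  obtain ⟨hqb, hqt⟩ := hcompl q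
  have main : ∀ w : α, p ≤ w → x ⊓ w = p → x ⊔ w = q →
      w = ((compl x) ⊓ q) ⊔ p := by
    intro w hpw hxw hxw'
    set u := w ⊓ p' with hu
    have hup : u ⊔ p = w := by
      rw [hu, inf_sup_assoc_of_le p' hpw, sup_comm p' p, hpt, inf_top_eq]
    have huq : u ≤ q := le_trans inf_le_left (le_trans le_sup_right hxw'.le)
    have hxu_sup : x ⊔ u = q := by
      calc x ⊔ u = (x ⊔ p) ⊔ u := by rw [sup_eq_left.2 hpx]
        _ = x ⊔ (u ⊔ p) := by ac_rfl
        _ = x ⊔ w := by rw [hup]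
        _ = q := hxw'
    have hxu_inf : x ⊓ u = ⊥ := by
      calc x ⊓ u = (x ⊓ w) ⊓ p' := by rw [hu, inf_assoc]
        _ = p ⊓ p' := by rw [hxw]
        _ = ⊥ := hpb
    set v := u ⊔ q' with hv
    have hqv : q ⊓ v = u := by
      rw [hv, inf_comm, sup_inf_assoc_of_le q' huq, inf_comm q' q, hqb, sup_bot_eq]
    have hxv_inf : x ⊓ v = ⊥ := by
      calc x ⊓ v = (x ⊓ q) ⊓ v := by rw [inf_eq_left.2 hxq]
        _ = x ⊓ (q ⊓ v) := by rw [inf_assoc]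
        _ = x ⊓ u := by rw [hqv]
        _ = ⊥ := hxu_inf
    have hxv_sup : x ⊔ v = ⊤ := by
      calc x ⊔ v = (x ⊔ u) ⊔ q' := by rw [hv, sup_assoc]
        _ = q ⊔ q' := by rw [hxu_sup]
        _ = ⊤ := hqt
    have hvc : v = compl x := huniq x v hxv_inf hxv_sup
    calc w = u ⊔ p := hup.symm
      _ = (q ⊓ v) ⊔ p := by rw [hqv]
      _ = ((compl x) ⊓ q) ⊔ p := by rw [hvc, inf_comm]
  rw [main y hpy hxy hxy', main z hpz hxz hxz']

end Aux

/-- A uniquely complemented nondistributive lattice is not modular. -/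
theorem stmt_11 {α : Type*} [Lattice α] [BoundedOrder α]
    (compl : α → α)
    (hcompl : ∀ x, x ⊓ compl x = ⊥ ∧ x ⊔ compl x = ⊤)
    (huniq : ∀ x y, x ⊓ y = ⊥ → x ⊔ y = ⊤ → y = compl x)
    (hnondistrib : ¬ ∀ x y z : α, x ⊓ (y ⊔ z) = (x ⊓ y) ⊔ (x ⊓ z)) :
    ¬ ∀ x y z : α, x ≤ z → x ⊔ (y ⊓ z) = (x ⊔ y) ⊓ z := by
  intro hmod
  haveI : IsModularLattice α := ⟨fun {x} y {z} h => (hmod x y z h).ge⟩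
  apply hnondistrib
  intro a b c
  set p : α := (a ⊓ b) ⊔ ((b ⊓ c) ⊔ (c ⊓ a)) with hp
  set q : α := (a ⊔ b) ⊓ ((b ⊔ c) ⊓ (c ⊔ a)) with hq
  have hpq : p ≤ q := by rw [hp, hq]; exact aux_ple a b c
  -- permuted forms of p and q
  have hp2 : p = (b ⊓ c) ⊔ ((c ⊓ a) ⊔ (a ⊓ b)) := by rw [hp]; ac_rfl
  have hp3 : p = (a ⊓ c) ⊔ ((c ⊓ b) ⊔ (b ⊓ a)) := by rw [hp]; ac_rfl
  have hq2 : q = (b ⊔ c) ⊓ ((c ⊔ a) ⊓ (a ⊔ b)) := by rw [hq]; ac_rfl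
  have hq3 : q = (a ⊔ c) ⊓ ((c ⊔ b) ⊓ (b ⊔ a)) := by rw [hq]; ac_rfl
  set x : α := (a ⊓ q) ⊔ p with hx
  set y : α := (b ⊓ q) ⊔ p with hy
  set z : α := (c ⊓ q) ⊔ p with hz
  have hxf : x = (a ⊔ p) ⊓ q := aux_form a hpq
  have hyf : y = (b ⊔ p) ⊓ q := aux_form b hpq
  have hzf : z = (c ⊔ p) ⊓ q := aux_form c hpq
  have hxy : x ⊓ y = p := by rw [hxf, hyf]; exact aux_inf a b c p q hp hq
  have hxz : x ⊓ z = p := by rw [hxf, hzf]; exact aux_inf a c b p q hp3 hq3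
  have hyz : y ⊓ z = p := by rw [hyf, hzf]; exact aux_inf b c a p q hp2 hq2
  have hxy' : x ⊔ y = q := by rw [hx, hy]; exact aux_sup a b c p q hp hq
  have hxz' : x ⊔ z = q := by rw [hx, hz]; exact aux_sup a c b p q hp3 hq3
  have hyz' : y ⊔ z = q := by rw [hy, hz]; exact aux_sup b c a p q hp2 hq2
  have hpx : p ≤ x := le_sup_right
  have hxq : x ≤ q := by rw [hxf]; exact inf_le_right
  have hyzeq : y = z :=
    aux_uniq compl hcompl huniq p q x y z hpx hxq le_sup_right le_sup_right
      hxy hxy' hxz hxz'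
  have hpeqq : p = q := by
    have h1 : p = z := by rw [← hyz, hyzeq, inf_idem]
    have h2 : q = z := by rw [← hyz', hyzeq, sup_idem]
    rw [h1, h2]
  -- now derive distributivity for a b c
  have haq : a ⊓ q = a ⊓ (b ⊔ c) := by
    rw [hq]
    have h1 : a ≤ a ⊔ b := le_sup_left
    have h2 : a ≤ c ⊔ a := le_sup_right
    calc a ⊓ ((a ⊔ b) ⊓ ((b ⊔ c) ⊓ (c ⊔ a)))
        = (a ⊓ (a ⊔ b)) ⊓ ((b ⊔ c) ⊓ (c ⊔ a)) := by rw [inf_assoc]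
      _ = a ⊓ ((b ⊔ c) ⊓ (c ⊔ a)) := by rw [inf_eq_left.2 h1]
      _ = (a ⊓ (c ⊔ a)) ⊓ (b ⊔ c) := by ac_rfl
      _ = a ⊓ (b ⊔ c) := by rw [inf_eq_left.2 h2]
  have hap : a ⊓ p = (a ⊓ b) ⊔ (a ⊓ c) := by
    have hs : (a ⊓ b) ⊔ (c ⊓ a) ≤ a := sup_le inf_le_left inf_le_right
    calc a ⊓ p = (((a ⊓ b) ⊔ (c ⊓ a)) ⊔ (b ⊓ c)) ⊓ a := by rw [hp, inf_comm]; ac_rfl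
      _ = ((a ⊓ b) ⊔ (c ⊓ a)) ⊔ ((b ⊓ c) ⊓ a) := sup_inf_assoc_of_le (b ⊓ c) hs
      _ = (a ⊓ b) ⊔ (a ⊓ c) := by
            have : (b ⊓ c) ⊓ a ≤ a ⊓ c := le_inf (le_trans inf_le_right le_rfl)
              (le_trans inf_le_left inf_le_right)
            rw [inf_comm c a, sup_assoc, sup_eq_left.2 this]
  calc a ⊓ (b ⊔ c) = a ⊓ q := haq.symm
    _ = a ⊓ p := by rw [hpeqq]
    _ = (a ⊓ b) ⊔ (a ⊓ c) := hap
end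

section
/- In a uniquely complemented lattice L, if for each nonzero element x there exists a lattice homomorphism φ : L → {0,1} (preserving 0 and 1) with φ(x) = 1, then L is distributive. -/
/-- In a uniquely complemented lattice `L`, if for every nonzero `x` there is a
`{0,1}`-lattice homomorphism `φ : L → {0,1}` (to the two-element lattice `Bool`)
with `φ x = 1`, then `L` is distributive. -/
theorem stmt_12 {α : Type*} [Lattice α] [BoundedOrder α]
    (compl : α → α)
    (hcompl : ∀ x, x ⊓ compl x = ⊥ ∧ x ⊔ compl x = ⊤)
    (huniq : ∀ x y, x ⊓ y = ⊥ → x ⊔ y = ⊤ → y = compl x)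
    (hhom : ∀ x : α, x ≠ ⊥ → ∃ φ : α → Bool,
        (∀ a b, φ (a ⊓ b) = φ a ⊓ φ b) ∧
        (∀ a b, φ (a ⊔ b) = φ a ⊔ φ b) ∧
        φ ⊥ = ⊥ ∧ φ ⊤ = ⊤ ∧ φ x = ⊤) :
    ∀ x y z : α, x ⊓ (y ⊔ z) = (x ⊓ y) ⊔ (x ⊓ z) := by
  intro x y z
  set a := x ⊓ (y ⊔ z) with ha
  set b := (x ⊓ y) ⊔ (x ⊓ z) with hb
  have hba : b ≤ a :=
    sup_le (inf_le_inf_left x le_sup_left) (inf_le_inf_left x le_sup_right)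
  set c := compl b with hc
  by_cases he : a ⊓ c = ⊥
  · -- both a and b are complements of c
    have hbc := hcompl b
    have hac_sup : a ⊔ c = ⊤ :=
      top_le_iff.mp (hbc.2 ▸ sup_le_sup_right hba c)
    have h1 : a = compl c := huniq c a (by rw [inf_comm]; exact he) (by rw [sup_comm]; exact hac_sup)
    have h2 : b = compl c := huniq c b (by rw [inf_comm]; exact hbc.1) (by rw [sup_comm]; exact hbc.2)
    rw [h1, h2]
  · obtain ⟨φ, hinf, hsup, hbot, htop, he1⟩ := hhom _ he
    exfalso
    have hab : φ a = φ b := by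
      rw [ha, hb, hinf, hsup, hsup, hinf, hinf, inf_sup_left]
    have hac : φ a ⊓ φ c = ⊤ := by rw [← hinf, he1]
    obtain ⟨hfa, hfc⟩ : φ a = true ∧ φ c = true := by
      simpa using hac
    have hbc : φ b ⊓ φ c = ⊥ := by rw [← hinf, (hcompl b).1, hbot]
    rw [hfc] at hbc
    rw [hab] at hfa
    simp [hfa] at hbc
end

section
/- (Salii) In a uniquely complemented lattice, if every nonzero element contains a nonzero regular element, then the lattice is distributive. -/
/-- (Salii) A uniquely complemented lattice in which every nonzero element
contains a nonzero regular element is distributive.  An element `a` is regular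
if `a ⊓ x = ⊥` and `a ⊓ y = ⊥` imply `a ⊓ (x ⊔ y) = ⊥`. -/
theorem stmt_18 {α : Type*} [Lattice α] [BoundedOrder α]
    (compl : α → α)
    (hcompl : ∀ x, x ⊓ compl x = ⊥ ∧ x ⊔ compl x = ⊤)
    (huniq : ∀ x y, x ⊓ y = ⊥ → x ⊔ y = ⊤ → y = compl x)
    (hreg : ∀ z : α, z ≠ ⊥ → ∃ a : α, a ≠ ⊥ ∧ a ≤ z ∧
      (∀ x y : α, a ⊓ x = ⊥ → a ⊓ y = ⊥ → a ⊓ (x ⊔ y) = ⊥)) :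
    ∀ x y z : α, x ⊓ (y ⊔ z) = (x ⊓ y) ⊔ (x ⊓ z) := by
  -- Step 1: every element is regular
  have reg : ∀ a x y : α, a ⊓ x = ⊥ → a ⊓ y = ⊥ → a ⊓ (x ⊔ y) = ⊥ := by
    intro a x y hx hy
    by_contra h
    obtain ⟨b, hb0, hble, hbreg⟩ := hreg _ h
    have hba : b ≤ a := hble.trans inf_le_left
    have hbx : b ⊓ x = ⊥ :=
      le_bot_iff.mp (le_trans (inf_le_inf_right x hba) hx.le)
    have hby : b ⊓ y = ⊥ :=
      le_bot_iff.mp (le_trans (inf_le_inf_right y hba) hy.le)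
    have : b ⊓ (x ⊔ y) = ⊥ := hbreg x y hbx hby
    have hb : b ≤ x ⊔ y := hble.trans inf_le_right
    exact hb0 (by rw [← inf_eq_left.mpr hb, this])
  -- Step 2: disjointness implies below the complement
  have P : ∀ x y : α, x ⊓ y = ⊥ → y ≤ compl x := by
    intro x y h
    have h1 : x ⊓ (y ⊔ compl x) = ⊥ := reg x y (compl x) h (hcompl x).1
    have h2 : x ⊔ (y ⊔ compl x) = ⊤ := by
      rw [eq_top_iff, ← (hcompl x).2]
      exact sup_le_sup_left le_sup_right x
    have := huniq x (y ⊔ compl x) h1 h2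
    calc y ≤ y ⊔ compl x := le_sup_left
    _ = compl x := this
  -- Step 3: involution
  have I : ∀ x : α, compl (compl x) = x := fun x =>
    (huniq (compl x) x (by rw [inf_comm]; exact (hcompl x).1)
      (by rw [sup_comm]; exact (hcompl x).2)).symm
  -- Step 4: distributivity
  intro x y z
  set u := (x ⊓ y) ⊔ (x ⊓ z) with hu
  refine le_antisymm ?_ (sup_le (inf_le_inf_left x le_sup_left)
    (inf_le_inf_left x le_sup_right))
  set t := compl u with ht
  have hut : u ⊓ t = ⊥ := (hcompl u).1
  have hay : (x ⊓ t) ⊓ y = ⊥ := by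
    apply le_bot_iff.mp
    calc (x ⊓ t) ⊓ y = (x ⊓ y) ⊓ t := by
          rw [inf_right_comm]
    _ ≤ u ⊓ t := inf_le_inf_right t le_sup_left
    _ = ⊥ := hut
  have haz : (x ⊓ t) ⊓ z = ⊥ := by
    apply le_bot_iff.mp
    calc (x ⊓ t) ⊓ z = (x ⊓ z) ⊓ t := by
          rw [inf_right_comm]
    _ ≤ u ⊓ t := inf_le_inf_right t le_sup_right
    _ = ⊥ := hut
  have key : (x ⊓ t) ⊓ (y ⊔ z) = ⊥ := reg (x ⊓ t) y z hay haz
  have : t ⊓ (x ⊓ (y ⊔ z)) = ⊥ := by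
    rw [← key]; ac_rfl
  have := P t (x ⊓ (y ⊔ z)) this
  rwa [ht, I u] at this
end
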